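/- arXiv:2602.06261 — 2 statements merged into one kernel-verified Lean document; each statement's English description precedes it below -/
import Mathlib

section
/- Let D > 0 and t0 be real. Suppose τ, δ : [t0, ∞) → ℝ are continuously differentiable with 0 ≤ δ(t) ≤ τ(t) ≤ D and δ'(t) < 1 for all t ≥ t0. Then for every t ≥ t0 there exists a unique c ∈ [0, D] such that c = τ(t) − δ(t − c). -/
/-! Writing `g x = x - δ x`, the equation `c = τ t - δ (t - c)` says `g (t - c) = t - τ t`.
Since `δ' < 1`, `g` is strictly increasing, which gives uniqueness; and the bounds
`0 ≤ δ ≤ τ ≤ D` place `t - τ t` between `g (t - D)` and `g t`, so the intermediate value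
theorem gives existence. -/

open Set

theorem strictMonoOn_sub_of_hasDerivAt_lt_one {s : Set ℝ} (hs : Convex ℝ s) {f f' : ℝ → ℝ}
    (hf : ∀ x ∈ s, HasDerivAt f (f' x) x) (hf' : ∀ x ∈ s, f' x < 1) :
    StrictMonoOn (fun x => x - f x) s := by
  have hderiv : ∀ x ∈ s, HasDerivAt (fun x => x - f x) (1 - f' x) x :=
    fun x hx => (hasDerivAt_id x).sub (hf x hx)
  refine strictMonoOn_of_deriv_pos hs
    (fun x hx => (hderiv x hx).continuousAt.continuousWithinAt) fun x hx => ?_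
  rw [(hderiv x (interior_subset hx)).deriv, sub_pos]
  exact hf' x (interior_subset hx)

theorem stmt0_general (D t0 : ℝ) (τ δ δ' : ℝ → ℝ)
    (hδderiv : ∀ t, t0 - D ≤ t → HasDerivAt δ (δ' t) t)
    (hbounds : ∀ t, t0 - D ≤ t → 0 ≤ δ t ∧ δ t ≤ τ t ∧ τ t ≤ D)
    (hδ'lt : ∀ t, t0 - D ≤ t → δ' t < 1) :
    ∀ t, t0 ≤ t → ∃! c, c ∈ Set.Icc (0 : ℝ) D ∧ c = τ t - δ (t - c) := by
  intro t ht
  set g : ℝ → ℝ := fun x => x - δ x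
  have hmono : StrictMonoOn g (Ici (t0 - D)) :=
    strictMonoOn_sub_of_hasDerivAt_lt_one (convex_Ici _) hδderiv hδ'lt
  have hD : 0 ≤ D := by
    obtain ⟨h0, h1, h2⟩ := hbounds (t0 - D) le_rfl
    linarith
  obtain ⟨-, hδτ, hτD⟩ := hbounds t (by linarith)
  have hδtD := (hbounds (t - D) (by linarith)).1
  have hcont : ContinuousOn g (Icc (t - D) t) := continuousOn_id.sub fun x hx =>
    (hδderiv x (by linarith [hx.1])).continuousAt.continuousWithinAt
  obtain ⟨x, ⟨hxl, hxr⟩, hgx⟩ :=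
    intermediate_value_Icc (by linarith) hcont (show t - τ t ∈ Icc (g (t - D)) (g t) by
      constructor <;> simp only [g] <;> linarith)
  simp only [g] at hgx
  refine ⟨t - x, ⟨⟨by linarith, by linarith⟩, by rw [sub_sub_cancel]; linarith⟩, ?_⟩
  rintro c ⟨⟨hc0, hcD⟩, hc⟩
  have htc : t - c = x :=
    hmono.injOn (by simp only [mem_Ici]; linarith) (by simp only [mem_Ici]; linarith)
      (by simp only [g]; linarith)
  linarith

/-- existence and uniqueness of c ∈ [0,D] with c = τ(t) − δ(t − c). -/
theorem stmt0 (D t0 : ℝ) (hD : 0 < D) (τ δ δ' : ℝ → ℝ)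
    (hδderiv : ∀ t, t0 - D ≤ t → HasDerivAt δ (δ' t) t)
    (hτcont : ContinuousOn τ (Set.Ici (t0 - D)))
    (hbounds : ∀ t, t0 - D ≤ t → 0 ≤ δ t ∧ δ t ≤ τ t ∧ τ t ≤ D)
    (hδ'lt : ∀ t, t0 - D ≤ t → δ' t < 1) :
    ∀ t, t0 ≤ t → ∃! c, c ∈ Set.Icc (0 : ℝ) D ∧ c = τ t - δ (t - c) :=
  stmt0_general D t0 τ δ δ' hδderiv hbounds hδ'lt
end

section
/- Under the setting of the substitution lemma with constant delays (x eventually positive solution, P̄(t) := P(t) − Q(t − τ + δ) ≥ 0, R(t) + ∫_{t−τ+δ}^{t} Q(s) ds ≤ 1, and for every T0 there exists ξ > T0 with P̄(ξ) > 0), the function y(t) = x(t) − R(t)x(t − r) − ∫_{t−τ+δ}^{t} Q(s)x(s − δ) ds satisfies y'(t) ≤ 0 and 0 < y(t) ≤ x(t) for all sufficiently large t. -/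
/-!
For `y = neutralSubst R Q x r τ δ`, differentiating under the sliding integral and substituting
the equation gives `y' = -(P - Q(· - τ + δ)) x(· - τ) ≤ 0`, and `y ≤ x` because every subtracted
term is nonnegative. If `y` ever became nonpositive, then at a later point `ξ` with `P̄ ξ > 0` it
would be strictly decreasing, so `y ≤ -α < 0` from some `t₁` on. Since `R + ∫ Q ≤ 1`, the terms
subtracted from `x` in `y` are then a sub-convex average of values of `x` on the preceding window
of length `D`, so `x` drops by at least `α` below its maximum over every such window. Iterating
window by window drives `x` below zero, contradicting its positivity.
-/

open Set Filter Topology MeasureTheory intervalIntegral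

theorem hasDerivAt_slidingIntegral {g : ℝ → ℝ} (hg : Continuous g) (h t : ℝ) :
    HasDerivAt (fun u => ∫ s in (u - h)..u, g s) (g t - g (t - h)) t := by
  have hF : ∀ u, HasDerivAt (fun v => ∫ s in (0 : ℝ)..v, g s) (g u) u := fun u =>
    (hg.integral_hasStrictDerivAt 0 u).hasDerivAt
  refine ((hF t).sub ((hF (t - h)).comp_sub_const t h)).congr_of_eventuallyEq
    (Eventually.of_forall fun u => ?_)
  exact (integral_interval_sub_left (hg.intervalIntegrable _ _) (hg.intervalIntegrable _ _)).symm

theorem HasDerivAt.exists_gt_lt_of_neg {f : ℝ → ℝ} {f' a : ℝ} (hf : HasDerivAt f f' a)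
    (hf' : f' < 0) : ∃ b, a < b ∧ f b < f a := by
  have hslope : ∀ᶠ b in 𝓝[>] a, slope f a b < 0 :=
    hf.hasDerivWithinAt.limsup_slope_le' (lt_irrefl a) hf'
  obtain ⟨b, hb, hab⟩ := (hslope.and self_mem_nhdsWithin).exists
  refine ⟨b, hab, ?_⟩
  rwa [slope_def_field, div_lt_iff₀ (sub_pos.2 hab), zero_mul, sub_neg] at hb

theorem mul_add_integral_mul_le {a b c w M : ℝ} {q g : ℝ → ℝ} (hab : a ≤ b) (hc : 0 ≤ c)
    (hq : ∀ u ∈ Icc a b, 0 ≤ q u) (hqi : IntervalIntegrable q volume a b)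
    (hqgi : IntervalIntegrable (fun u => q u * g u) volume a b)
    (hM : 0 ≤ M) (hw : w ≤ M) (hg : ∀ u ∈ Icc a b, g u ≤ M)
    (hsum : c + ∫ u in a..b, q u ≤ 1) :
    c * w + ∫ u in a..b, q u * g u ≤ M := by
  have hint : ∫ u in a..b, q u * g u ≤ (∫ u in a..b, q u) * M := by
    rw [← intervalIntegral.integral_mul_const]
    exact integral_mono_on hab hqgi (hqi.mul_const M) fun u hu =>
      mul_le_mul_of_nonneg_left (hg u hu) (hq u hu)
  nlinarith [mul_le_mul_of_nonneg_left hw hc, mul_nonneg (sub_nonneg.2 hsum) hM]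

theorem exists_nonpos_of_le_windowMax_sub {x : ℝ → ℝ} {t₀ D α : ℝ}
    (hx : ContinuousOn x (Ici (t₀ - D))) (hD : 0 < D) (hα : 0 < α)
    (hstep : ∀ s, t₀ ≤ s → ∀ M, 0 ≤ M → (∀ u ∈ Icc (s - D) s, x u ≤ M) → x s ≤ M - α) :
    ∃ s, t₀ ≤ s ∧ x s ≤ 0 := by
  by_contra! hpos
  have hmax : ∀ s, t₀ - D ≤ s → ∃ c ∈ Icc (t₀ - D) s, IsMaxOn x (Icc (t₀ - D) s) c := fun s hs =>
    isCompact_Icc.exists_isMaxOn (nonempty_Icc.2 hs) (hx.mono Icc_subset_Ici_self)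
  obtain ⟨c₀, -, hc₀⟩ := hmax t₀ (by linarith)
  -- the maximum over `[t₀ - D, s]` cannot sit at a point of `[t₀, s]`, where `hstep` applies
  have hbound : ∀ s, t₀ ≤ s → x s ≤ x c₀ := by
    intro s hs
    obtain ⟨c, hc, hcmax⟩ := hmax s (by linarith)
    have hct : c < t₀ := by
      by_contra! hct
      have := hstep c hct (x c) (hpos c hct).le fun u hu =>
        hcmax ⟨by linarith [hu.1], hu.2.trans hc.2⟩
      linarith
    exact (hcmax ⟨by linarith, le_rfl⟩).trans (hc₀ ⟨hc.1, hct.le⟩)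
  have hdecay : ∀ n : ℕ, ∀ s, t₀ + n * D ≤ s → x s ≤ x c₀ - n * α := by
    intro n
    induction n with
    | zero => simpa using hbound
    | succ n ih =>
      intro s hs
      push_cast at hs ⊢
      have hnD : 0 ≤ (n : ℝ) * D := by positivity
      have := hstep s (by linarith) _ ((hpos s (by linarith)).le.trans (ih s (by linarith)))
        fun u hu => ih u (by linarith [hu.1])
      linarith
  obtain ⟨n, hn⟩ := exists_nat_gt (x c₀ / α)
  rw [div_lt_iff₀ hα] at hn
  have hnD : 0 ≤ (n : ℝ) * D := by positivity
  linarith [hdecay n _ le_rfl, hpos (t₀ + n * D) (by linarith)]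

noncomputable def neutralSubst (R Q x : ℝ → ℝ) (r τ δ t : ℝ) : ℝ :=
  x t - R t * x (t - r) - ∫ s in (t - τ + δ)..t, Q s * x (s - δ)

section neutralSubst

variable {R Q x : ℝ → ℝ} {r τ δ : ℝ}

theorem hasDerivAt_neutralSubst {P z' : ℝ → ℝ} {t : ℝ} (hQ : Continuous Q) (hx : Continuous x)
    (hz : HasDerivAt (fun s => x s - R s * x (s - r)) (z' t) t)
    (heq : z' t + P t * x (t - τ) - Q t * x (t - δ) = 0) :
    HasDerivAt (neutralSubst R Q x r τ δ) (-((P t - Q (t - τ + δ)) * x (t - τ))) t := by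
  have hg : Continuous fun s => Q s * x (s - δ) := hQ.mul (hx.comp (continuous_sub_right δ))
  have hI := hasDerivAt_slidingIntegral hg (τ - δ) t
  simp only [← sub_add, add_sub_cancel_right] at hI
  exact (hz.sub hI).congr_deriv (by linear_combination heq)

theorem neutralSubst_le_self {t : ℝ} (hδτ : δ ≤ τ) (hR : 0 ≤ R t) (hQ : ∀ s, 0 ≤ Q s)
    (hxr : 0 ≤ x (t - r)) (hx : ∀ s ∈ Icc (t - τ) (t - δ), 0 ≤ x s) :
    neutralSubst R Q x r τ δ t ≤ x t := by
  have hint : 0 ≤ ∫ s in (t - τ + δ)..t, Q s * x (s - δ) :=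
    integral_nonneg (by linarith) fun s hs =>
      mul_nonneg (hQ s) (hx _ ⟨by linarith [hs.1], by linarith [hs.2]⟩)
  unfold neutralSubst
  linarith [mul_nonneg hR hxr]

theorem exists_nonpos_of_neutralSubst_le_neg {D t₀ c : ℝ} (hD : 0 < D) (hr0 : 0 ≤ r)
    (hrD : r ≤ D) (hδ0 : 0 ≤ δ) (hδτ : δ ≤ τ) (hτD : τ ≤ D) (hQ : Continuous Q)
    (hx : Continuous x) (hR0 : ∀ t, 0 ≤ R t) (hQ0 : ∀ t, 0 ≤ Q t)
    (hkey : ∀ t, R t + ∫ s in (t - τ + δ)..t, Q s ≤ 1) (hc : c < 0)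
    (hy : ∀ s, t₀ ≤ s → neutralSubst R Q x r τ δ s ≤ c) :
    ∃ s, t₀ ≤ s ∧ x s ≤ 0 := by
  refine exists_nonpos_of_le_windowMax_sub hx.continuousOn hD (neg_pos.2 hc) fun s hs M hM hxM => ?_
  have hwindow : R s * x (s - r) + ∫ u in (s - τ + δ)..s, Q u * x (u - δ) ≤ M :=
    mul_add_integral_mul_le (by linarith) (hR0 s) (fun u _ => hQ0 u)
      (hQ.intervalIntegrable _ _)
      ((hQ.mul (hx.comp (continuous_sub_right δ))).intervalIntegrable _ _) hM
      (hxM _ ⟨by linarith, by linarith⟩)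
      (fun u hu => hxM _ ⟨by linarith [hu.1], by linarith [hu.2]⟩) (hkey s)
  have := hy s hs
  unfold neutralSubst at this
  linarith

end neutralSubst

theorem stmt7_general (T D r τ δ : ℝ) (hD : 0 < D)
    (hr0 : 0 ≤ r) (hrD : r ≤ D) (hδ0 : 0 ≤ δ) (hδτ : δ ≤ τ) (hτD : τ ≤ D)
    (R P Q x z' : ℝ → ℝ)
    (hQcont : Continuous Q)
    (hR0 : ∀ t, 0 ≤ R t) (hQ0 : ∀ t, 0 ≤ Q t)
    (hxcont : Continuous x) (hxpos : ∀ t, T ≤ t → 0 < x t)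
    (hz : ∀ t, T < t → HasDerivAt (fun s => x s - R s * x (s - r)) (z' t) t)
    (heq : ∀ t, T < t → z' t + P t * x (t - τ) - Q t * x (t - δ) = 0)
    (hPbar : ∀ t, 0 ≤ P t - Q (t - τ + δ))
    (hPbarpos : ∀ T0 : ℝ, ∃ ξ, T0 < ξ ∧ 0 < P ξ - Q (ξ - τ + δ))
    (hkey : ∀ t, R t + (∫ s in (t - τ + δ)..t, Q s) ≤ 1) :
    ∃ T1, T ≤ T1 ∧ ∀ t, T1 ≤ t →
      deriv (fun u => x u - R u * x (u - r) - ∫ s in (u - τ + δ)..u, Q s * x (s - δ)) t ≤ 0 ∧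
      0 < x t - R t * x (t - r) - (∫ s in (t - τ + δ)..t, Q s * x (s - δ)) ∧
      x t - R t * x (t - r) - (∫ s in (t - τ + δ)..t, Q s * x (s - δ)) ≤ x t := by
  have hy' : ∀ t, T < t →
      HasDerivAt (neutralSubst R Q x r τ δ) (-((P t - Q (t - τ + δ)) * x (t - τ))) t :=
    fun t ht => hasDerivAt_neutralSubst hQcont hxcont (hz t ht) (heq t ht)
  have hy'_nonpos : ∀ t, T + D ≤ t → -((P t - Q (t - τ + δ)) * x (t - τ)) ≤ 0 := fun t ht =>
    neg_nonpos.2 (mul_nonneg (hPbar t) (hxpos _ (by linarith)).le)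
  have hanti : AntitoneOn (neutralSubst R Q x r τ δ) (Ici (T + D)) := by
    refine antitoneOn_of_hasDerivWithinAt_nonpos (convex_Ici _)
      (fun t ht => (hy' t (by linarith [mem_Ici.1 ht])).continuousAt.continuousWithinAt)
      (fun t ht => ?_) (fun t ht => hy'_nonpos t ?_) <;> rw [interior_Ici, mem_Ioi] at ht
    · exact (hy' t (by linarith)).hasDerivWithinAt
    · exact ht.le
  refine ⟨T + D, by linarith, fun t ht => ⟨?_, ?_, ?_⟩⟩
  · exact (hy' t (by linarith)).deriv ▸ hy'_nonpos t ht
  · by_contra! hyt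
    obtain ⟨ξ, htξ, hξ⟩ := hPbarpos t
    obtain ⟨t₁, hξt₁, ht₁⟩ := (hy' ξ (by linarith)).exists_gt_lt_of_neg
      (neg_neg_of_pos (mul_pos hξ (hxpos _ (by linarith))))
    have hyt₁ : neutralSubst R Q x r τ δ t₁ < 0 :=
      ht₁.trans_le ((hanti ht (mem_Ici.2 (by linarith)) htξ.le).trans hyt)
    obtain ⟨s, hs, hxs⟩ := exists_nonpos_of_neutralSubst_le_neg hD hr0 hrD hδ0 hδτ hτD hQcont
      hxcont hR0 hQ0 hkey hyt₁ fun s hs =>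
        hanti (mem_Ici.2 (by linarith)) (mem_Ici.2 (by linarith)) hs
    linarith [hxpos s (by linarith)]
  · exact neutralSubst_le_self hδτ (hR0 t) hQ0 (hxpos _ (by linarith)).le
      fun s hs => (hxpos s (by linarith [hs.1])).le

/-- substitution lemma with constant delays: eventually
    y'(t) ≤ 0 and 0 < y(t) ≤ x(t). -/
theorem stmt7 (T D r τ δ : ℝ) (hD : 0 < D)
    (hr0 : 0 ≤ r) (hrD : r ≤ D) (hδ0 : 0 ≤ δ) (hδτ : δ ≤ τ) (hτD : τ ≤ D)
    (R P Q x z' : ℝ → ℝ)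
    (hRcont : Continuous R) (hPcont : Continuous P) (hQcont : Continuous Q)
    (hR0 : ∀ t, 0 ≤ R t) (hP0 : ∀ t, 0 ≤ P t) (hQ0 : ∀ t, 0 ≤ Q t)
    (hxcont : Continuous x) (hxpos : ∀ t, T ≤ t → 0 < x t)
    (hz : ∀ t, T < t → HasDerivAt (fun s => x s - R s * x (s - r)) (z' t) t)
    (heq : ∀ t, T < t → z' t + P t * x (t - τ) - Q t * x (t - δ) = 0)
    (hPbar : ∀ t, 0 ≤ P t - Q (t - τ + δ))
    (hPbarpos : ∀ T0 : ℝ, ∃ ξ, T0 < ξ ∧ 0 < P ξ - Q (ξ - τ + δ))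
    (hkey : ∀ t, R t + (∫ s in (t - τ + δ)..t, Q s) ≤ 1) :
    ∃ T1, T ≤ T1 ∧ ∀ t, T1 ≤ t →
      deriv (fun u => x u - R u * x (u - r) - ∫ s in (u - τ + δ)..u, Q s * x (s - δ)) t ≤ 0 ∧
      0 < x t - R t * x (t - r) - (∫ s in (t - τ + δ)..t, Q s * x (s - δ)) ∧
      x t - R t * x (t - r) - (∫ s in (t - τ + δ)..t, Q s * x (s - δ)) ≤ x t :=
  stmt7_general T D r τ δ hD hr0 hrD hδ0 hδτ hτD R P Q x z' hQcont hR0 hQ0 hxcont hxpos hz heq hPbar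
    hPbarpos hkey
end
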